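/- For all adjacent vertices x and y of G and every natural number t, the sum of the coordinates r_t(x,y)(z) over all vertices z with d(x,z) ≡ t (mod 2) equals the Fibonacci number f(2t+1). -/
import Mathlib


open scoped Classical

/-- `Φ⁻ₓ`: apply the reflection at every vertex at odd distance from `x`. -/
noncomputable def phiOdd {V : Type*} (G : SimpleGraph V) (x : V) (a : V → ℤ) : V → ℤ :=
  fun z => if Odd (G.dist x z) then -a z + ∑ᶠ w ∈ G.neighborSet z, a w else a z

/-- `Φ⁺ₓ`: apply the reflection at every vertex at even distance from `x`. -/
noncomputable def phiEven {V : Type*} (G : SimpleGraph V) (x : V) (a : V → ℤ) : V → ℤ :=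
  fun z => if Even (G.dist x z) then -a z + ∑ᶠ w ∈ G.neighborSet z, a w else a z

/-- The Fibonacci vectors `s_t(x)`: `s_0(x) = δ_x`, `s_{t+1}(x) = Φ⁻ₓ s_t(x)` for even `t`
and `s_{t+1}(x) = Φ⁺ₓ s_t(x)` for odd `t`. -/
noncomputable def sVec {V : Type*} (G : SimpleGraph V) (x : V) : ℕ → V → ℤ
  | 0 => fun z => if z = x then 1 else 0
  | t + 1 => if Even t then phiOdd G x (sVec G x t) else phiEven G x (sVec G x t)

/-- The Fibonacci vectors `r_t(x,y)`: `r_0(x,y) = δ_x + δ_y`, `r_{t+1}(x,y) = Φ⁻ₓ r_t(x,y)`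
for even `t` and `r_{t+1}(x,y) = Φ⁺ₓ r_t(x,y)` for odd `t`. -/
noncomputable def rVec {V : Type*} (G : SimpleGraph V) (x y : V) : ℕ → V → ℤ
  | 0 => fun z => (if z = x then 1 else 0) + (if z = y then 1 else 0)
  | t + 1 => if Even t then phiOdd G x (rVec G x y t) else phiEven G x (rVec G x y t)

section Aux
variable {V : Type*} {G : SimpleGraph V}

lemma tree_adj_dist (hconn : G.Connected) (hacyc : G.IsAcyclic) (x : V) {w z : V}
    (h : G.Adj w z) : G.dist x z = G.dist x w + 1 ∨ G.dist x w = G.dist x z + 1 := by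
  have hwz1 : G.dist w z = 1 := SimpleGraph.dist_eq_one_iff_adj.mpr h
  have hzw1 : G.dist z w = 1 := SimpleGraph.dist_eq_one_iff_adj.mpr h.symm
  have h1 : G.dist x z ≤ G.dist x w + 1 := by
    calc G.dist x z ≤ G.dist x w + G.dist w z := hconn.dist_triangle
    _ = G.dist x w + 1 := by rw [hwz1]
  have h2 : G.dist x w ≤ G.dist x z + 1 := by
    calc G.dist x w ≤ G.dist x z + G.dist z w := hconn.dist_triangle
    _ = G.dist x z + 1 := by rw [hzw1]
  have hne : G.dist x z ≠ G.dist x w := by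
    intro heq
    obtain ⟨p, hp, hpl⟩ := hconn.exists_path_of_dist x w
    obtain ⟨q, hq, hql⟩ := hconn.exists_path_of_dist x z
    have hwq : w ∉ q.support := by
      intro hw
      have hspec := q.take_spec hw
      have hlen : (q.takeUntil w hw).length + (q.dropUntil w hw).length = q.length := by
        rw [← SimpleGraph.Walk.length_append, hspec]
      have h3 : G.dist x w ≤ (q.takeUntil w hw).length := SimpleGraph.dist_le _
      have h4 : G.dist w z ≤ (q.dropUntil w hw).length := SimpleGraph.dist_le _
      omega
    have hc : (SimpleGraph.Walk.cons h q.reverse).IsPath := by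
      rw [SimpleGraph.Walk.cons_isPath_iff]
      exact ⟨hq.reverse, by simpa using hwq⟩
    have := hacyc.path_unique ⟨SimpleGraph.Walk.cons h q.reverse, hc⟩ ⟨p.reverse, hp.reverse⟩
    have hl := congrArg (fun r : G.Path w x => r.1.length) this
    simp [SimpleGraph.Walk.length_reverse, hpl, hql] at hl
    omega
  omega

lemma nbr_finite (hreg : ∀ v : V, (G.neighborSet v).ncard = 3) (v : V) :
    (G.neighborSet v).Finite := by
  by_contra h
  have := Set.Infinite.ncard (h : (G.neighborSet v).Infinite)
  rw [hreg v] at this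
  omega

lemma ball_finite (hconn : G.Connected) (hfin : ∀ v : V, (G.neighborSet v).Finite) (x : V) :
    ∀ n : ℕ, {z : V | G.dist x z ≤ n}.Finite := by
  intro n
  induction n with
  | zero =>
    apply Set.Finite.subset (Set.finite_singleton x)
    intro z hz
    simp only [Set.mem_setOf_eq, Nat.le_zero] at hz
    have := (hconn.dist_eq_zero_iff).mp hz
    simp [this]
  | succ n ih =>
    apply Set.Finite.subset (ih.union (Set.Finite.biUnion ih (fun w _ => hfin w)))
    intro z hz
    simp only [Set.mem_setOf_eq] at hz
    rcases Nat.lt_or_ge (G.dist x z) (n+1) with hlt | hge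
    · exact Or.inl (Nat.lt_succ_iff.mp hlt)
    · have hd : G.dist x z = n + 1 := le_antisymm hz hge
      obtain ⟨p, hp, hlen⟩ := hconn.exists_path_of_dist x z
      right
      have hrl : p.reverse.length = n + 1 := by
        rw [SimpleGraph.Walk.length_reverse, hlen, hd]
      rcases hrev : p.reverse with _ | ⟨hadj, q⟩
      · rw [hrev] at hrl; simp at hrl
      · rename_i w
        rw [hrev] at hrl
        simp only [SimpleGraph.Walk.length_cons, Nat.add_right_cancel_iff] at hrl
        have hw : G.dist x w ≤ n := by
          rw [SimpleGraph.dist_comm]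
          calc G.dist w x ≤ q.length := SimpleGraph.dist_le q
          _ = n := hrl
        exact Set.mem_biUnion hw hadj.symm

lemma rVec_succ_apply (x y : V) (t : ℕ) (z : V) :
    rVec G x y (t+1) z =
      if G.dist x z % 2 = (t+1) % 2 then
        -rVec G x y t z + ∑ᶠ w ∈ G.neighborSet z, rVec G x y t w
      else rVec G x y t z := by
  rcases Nat.even_or_odd t with he | ho
  · rw [show rVec G x y (t+1) = phiOdd G x (rVec G x y t) by rw [rVec, if_pos he]]
    unfold phiOdd
    have hiff : Odd (G.dist x z) ↔ G.dist x z % 2 = (t+1) % 2 := by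
      rw [Nat.odd_iff]; obtain ⟨k, hk⟩ := he; omega
    by_cases hd : Odd (G.dist x z)
    · rw [if_pos hd, if_pos (hiff.mp hd)]
    · rw [if_neg hd, if_neg (fun hh => hd (hiff.mpr hh))]
  · rw [show rVec G x y (t+1) = phiEven G x (rVec G x y t) by
      rw [rVec, if_neg (Nat.not_even_iff_odd.mpr ho)]]
    unfold phiEven
    have hiff : Even (G.dist x z) ↔ G.dist x z % 2 = (t+1) % 2 := by
      rw [Nat.even_iff]; obtain ⟨k, hk⟩ := ho; omega
    by_cases hd : Even (G.dist x z)
    · rw [if_pos hd, if_pos (hiff.mp hd)]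
    · rw [if_neg hd, if_neg (fun hh => hd (hiff.mpr hh))]

lemma rVec_supp (hconn : G.Connected) {x y : V} (hxy : G.Adj x y) :
    ∀ t, Function.support (rVec G x y t) ⊆ {z | G.dist x z ≤ t + 1} := by
  intro t
  induction t with
  | zero =>
    intro z hz
    simp only [Function.mem_support, rVec] at hz
    by_cases h1 : z = x
    · subst h1; simp [SimpleGraph.dist_self]
    · by_cases h2 : z = y
      · subst h2
        simp only [Set.mem_setOf_eq]
        rw [SimpleGraph.dist_eq_one_iff_adj.mpr hxy]
      · simp [h1, h2] at hz
  | succ t ih =>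
    intro z hz
    simp only [Function.mem_support] at hz
    rw [rVec_succ_apply] at hz
    have key : rVec G x y t z ≠ 0 ∨ (∑ᶠ w ∈ G.neighborSet z, rVec G x y t w) ≠ 0 := by
      split_ifs at hz with hcond
      · by_cases ha : rVec G x y t z = 0
        · right; intro h0; rw [ha, h0] at hz; simp at hz
        · left; exact ha
      · left; exact hz
    rcases key with ha | hb
    · have := ih ha; simp only [Set.mem_setOf_eq] at this ⊢; omega
    · simp only [Set.mem_setOf_eq]
      by_contra hzb
      push_neg at hzb
      apply hb
      apply finsum_mem_eq_zero_of_forall_eq_zero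
      intro w hw
      by_contra hw0
      have h1 := ih hw0
      simp only [Set.mem_setOf_eq] at h1
      have h2 : G.dist x z ≤ G.dist x w + 1 := by
        calc G.dist x z ≤ G.dist x w + G.dist w z := hconn.dist_triangle
        _ = G.dist x w + 1 := by
            rw [SimpleGraph.dist_eq_one_iff_adj.mpr (((G.mem_neighborSet z w).mp hw).symm)]
      omega

lemma finsum_mem_filter_eq (g : V → ℤ) (s : Set V) [DecidablePred (· ∈ s)] (F : Finset V)
    (h : Function.support g ⊆ ↑F) :
    ∑ᶠ z ∈ s, g z = ∑ z ∈ F.filter (· ∈ s), g z := by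
  apply finsum_mem_eq_sum_of_inter_support_eq
  ext z
  simp only [Set.mem_inter_iff, Function.mem_support, Finset.coe_filter, Set.mem_setOf_eq]
  constructor
  · rintro ⟨hs, hg⟩; exact ⟨⟨h hg, hs⟩, hg⟩
  · rintro ⟨⟨_, hs⟩, hg⟩; exact ⟨hs, hg⟩

lemma step_S (hconn : G.Connected) (hacyc : G.IsAcyclic)
    (hreg : ∀ v : V, (G.neighborSet v).ncard = 3) {x y : V} (hxy : G.Adj x y) (t : ℕ) :
    ∑ᶠ z ∈ {z : V | G.dist x z % 2 = (t+1) % 2}, rVec G x y (t+1) z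
      = 3 * (∑ᶠ z ∈ {z : V | G.dist x z % 2 = t % 2}, rVec G x y t z)
        - ∑ᶠ z ∈ {z : V | G.dist x z % 2 = (t+1) % 2}, rVec G x y t z := by
  have hfin := nbr_finite hreg
  have hball := ball_finite hconn hfin x
  set a := rVec G x y t with ha
  set F : Finset V := (hball (t+3)).toFinset with hF
  have hFmem : ∀ z, z ∈ F ↔ G.dist x z ≤ t+3 := by
    intro z; simp [hF, Set.Finite.mem_toFinset]
  have hsupa : Function.support a ⊆ ↑F := by
    intro z hz
    have := rVec_supp hconn hxy t hz
    simp only [Set.mem_setOf_eq] at this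
    exact (hFmem z).mpr (by omega)
  have hsupb : Function.support (rVec G x y (t+1)) ⊆ ↑F := by
    intro z hz
    have := rVec_supp hconn hxy (t+1) hz
    simp only [Set.mem_setOf_eq] at this
    exact (hFmem z).mpr (by omega)
  rw [finsum_mem_filter_eq _ _ F hsupb, finsum_mem_filter_eq _ _ F hsupa,
      finsum_mem_filter_eq _ _ F hsupa]
  -- rewrite each summand on the Q side
  have hstepA : ∑ z ∈ F.filter (· ∈ {z : V | G.dist x z % 2 = (t+1) % 2}), rVec G x y (t+1) z
      = ∑ z ∈ F.filter (· ∈ {z : V | G.dist x z % 2 = (t+1) % 2}), (-a z + ∑ w ∈ F, if G.Adj z w then a w else 0) := by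
    apply Finset.sum_congr rfl
    intro z hz
    obtain ⟨hzF, hzQ⟩ := Finset.mem_filter.mp hz
    rw [rVec_succ_apply, if_pos (show G.dist x z % 2 = (t+1) % 2 from hzQ)]
    congr 1
    rw [← Finset.sum_filter]
    apply finsum_mem_eq_sum_of_inter_support_eq
    ext w
    simp only [Set.mem_inter_iff, Function.mem_support, Finset.coe_filter, Set.mem_setOf_eq,
      SimpleGraph.mem_neighborSet]
    constructor
    · rintro ⟨hs, hg⟩; exact ⟨⟨hsupa hg, hs⟩, hg⟩
    · rintro ⟨⟨_, hs⟩, hg⟩; exact ⟨hs, hg⟩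
  refine hstepA.trans ?_
  rw [Finset.sum_add_distrib, Finset.sum_neg_distrib, Finset.sum_comm]
  -- now compute the double sum
  have hstepD : ∀ w ∈ F, (∑ z ∈ F.filter (· ∈ {z : V | G.dist x z % 2 = (t+1) % 2}), if G.Adj z w then a w else 0)
      = 3 * (if w ∈ {z : V | G.dist x z % 2 = t % 2} then a w else 0) := by
    intro w _
    rw [← Finset.sum_filter, Finset.filter_filter, Finset.sum_const, nsmul_eq_mul]
    by_cases haw : a w = 0
    · simp [haw]
    · have hwball : G.dist x w ≤ t + 1 := by
        have := rVec_supp hconn hxy t haw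
        simpa using this
      by_cases hp : w ∈ {z : V | G.dist x z % 2 = t % 2}
      · -- neighbours of w are exactly the z's counted
        have hset : F.filter (fun z => z ∈ {z : V | G.dist x z % 2 = (t+1) % 2} ∧ G.Adj z w) = (hfin w).toFinset := by
          ext z
          simp only [Finset.mem_filter, Set.Finite.mem_toFinset, SimpleGraph.mem_neighborSet]
          constructor
          · rintro ⟨_, _, hadj⟩; exact hadj.symm
          · intro hadj
            have hd := tree_adj_dist hconn hacyc x hadj
            have hP : G.dist x w % 2 = t % 2 := hp
            refine ⟨(hFmem z).mpr (by omega), ?_, hadj.symm⟩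
            show G.dist x z % 2 = (t+1) % 2
            omega
        rw [hset, if_pos hp]
        have hcard : (hfin w).toFinset.card = 3 := by
          rw [← Set.ncard_eq_toFinset_card _ (hfin w), hreg w]
        rw [hcard]
        norm_num
      · -- no neighbour of w is in sQ
        have hQ : G.dist x w % 2 = (t+1) % 2 := by
          have : ¬ (G.dist x w % 2 = t % 2) := hp
          omega
        have hset : F.filter (fun z => z ∈ {z : V | G.dist x z % 2 = (t+1) % 2} ∧ G.Adj z w) = ∅ := by
          ext z
          simp only [Finset.mem_filter, Finset.notMem_empty, iff_false, not_and]
          rintro _ hzQ hadj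
          have hd := tree_adj_dist hconn hacyc x hadj
          have : G.dist x z % 2 = (t+1) % 2 := hzQ
          omega
        rw [hset, if_neg hp]
        simp
  have hD := Finset.sum_congr rfl hstepD
  rw [hD, ← Finset.mul_sum, ← Finset.sum_filter]
  ring
end Aux

section Main
variable {V : Type*} {G : SimpleGraph V}

lemma step_T (x y : V) (t : ℕ) :
    ∑ᶠ z ∈ {z : V | G.dist x z % 2 = (t+2) % 2}, rVec G x y (t+1) z
      = ∑ᶠ z ∈ {z : V | G.dist x z % 2 = t % 2}, rVec G x y t z := by
  have hset : {z : V | G.dist x z % 2 = (t+2) % 2} = {z : V | G.dist x z % 2 = t % 2} := by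
    ext z; simp only [Set.mem_setOf_eq]; omega
  rw [hset]
  apply finsum_mem_congr rfl
  intro z hz
  rw [rVec_succ_apply, if_neg]
  intro hcon
  have hz' : G.dist x z % 2 = t % 2 := hz
  omega

lemma base_S (hconn : G.Connected) {x y : V} (hxy : G.Adj x y) :
    ∑ᶠ z ∈ {z : V | G.dist x z % 2 = 0 % 2}, rVec G x y 0 z = 1 := by
  have hne := hxy.ne
  have hsup : Function.support (rVec G x y 0) ⊆ ↑({x, y} : Finset V) := by
    intro z hz
    simp only [Function.mem_support, rVec] at hz
    by_contra hc
    simp only [Finset.coe_insert, Finset.coe_singleton, Set.mem_insert_iff,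
      Set.mem_singleton_iff, not_or] at hc
    simp [hc.1, hc.2] at hz
  rw [finsum_mem_filter_eq _ _ _ hsup, Finset.sum_filter, Finset.sum_pair hne]
  have hdxx : G.dist x x = 0 := SimpleGraph.dist_self
  have hdxy : G.dist x y = 1 := SimpleGraph.dist_eq_one_iff_adj.mpr hxy
  simp [rVec, hdxx, hdxy, hne, Ne.symm hne, Set.mem_setOf_eq]

lemma base_T (hconn : G.Connected) {x y : V} (hxy : G.Adj x y) :
    ∑ᶠ z ∈ {z : V | G.dist x z % 2 = 1 % 2}, rVec G x y 0 z = 1 := by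
  have hne := hxy.ne
  have hsup : Function.support (rVec G x y 0) ⊆ ↑({x, y} : Finset V) := by
    intro z hz
    simp only [Function.mem_support, rVec] at hz
    by_contra hc
    simp only [Finset.coe_insert, Finset.coe_singleton, Set.mem_insert_iff,
      Set.mem_singleton_iff, not_or] at hc
    simp [hc.1, hc.2] at hz
  rw [finsum_mem_filter_eq _ _ _ hsup, Finset.sum_filter, Finset.sum_pair hne]
  have hdxx : G.dist x x = 0 := SimpleGraph.dist_self
  have hdxy : G.dist x y = 1 := SimpleGraph.dist_eq_one_iff_adj.mpr hxy
  simp [rVec, hdxx, hdxy, hne, Ne.symm hne, Set.mem_setOf_eq]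

end Main

/-- For adjacent vertices `x`, `y`, the sum of the coordinates `r_t(x,y)(z)` over all
vertices `z` with `d(x,z) ≡ t (mod 2)` equals the Fibonacci number `f (2t+1)`, where `f`
is the extended Fibonacci sequence. -/
theorem rVec_sum_eq_parity (f : ℤ → ℤ) (h0 : f 0 = 0) (h1 : f 1 = 1)
    (hrec : ∀ n : ℤ, f (n + 1) = f n + f (n - 1))
    (V : Type*) (G : SimpleGraph V) (hconn : G.Connected)
    (hacyc : G.IsAcyclic) (hreg : ∀ v : V, (G.neighborSet v).ncard = 3)
    (x y : V) (hxy : G.Adj x y) (t : ℕ) :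
    ∑ᶠ z ∈ {z : V | G.dist x z % 2 = t % 2}, rVec G x y t z = f (2 * t + 1) := by
  have main : ∀ t : ℕ,
      (∑ᶠ z ∈ {z : V | G.dist x z % 2 = t % 2}, rVec G x y t z = f (2 * t + 1)) ∧
      (∑ᶠ z ∈ {z : V | G.dist x z % 2 = (t+1) % 2}, rVec G x y t z = f (2 * t - 1)) := by
    intro t
    induction t with
    | zero =>
      constructor
      · rw [base_S hconn hxy]
        norm_num [h1]
      · rw [base_T hconn hxy]
        have := hrec 0
        norm_num [h0, h1] at this ⊢
        omega
    | succ t ih =>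
      obtain ⟨ihS, ihT⟩ := ih
      constructor
      · rw [step_S hconn hacyc hreg hxy t, ihS, ihT]
        have e1 := hrec (2*(t:ℤ)+2)
        have e2 := hrec (2*(t:ℤ)+1)
        have e3 := hrec (2*(t:ℤ))
        push_cast
        ring_nf at e1 e2 e3 ⊢
        linarith
      · rw [step_T x y t, ihS]
        push_cast
        ring_nf
  exact (main t).1
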